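/- Let (A, ·) be a Lie-admissible superalgebra over a field of characteristic zero, and let R : A → A be an even linear map satisfying R(x)·R(y) = R(R(x)·y + x·R(y)) for all homogeneous x, y (a Rota-Baxter operator of weight zero). Define x ∗ y := R(x)·y − (−1)^{|x||y|} y·R(x) for homogeneous x, y. Then (A, ∗) is a pre-Lie superalgebra. -/
import Mathlib


/-- The super sign `(−1)^{|x||y|}` for parities `i`, `j`. -/
def sgn (K : Type*) [Field K] (i j : ZMod 2) : K := (-1 : K) ^ (i.val * j.val)

/-- The supercommutator `[x,y] = x·y − (−1)^{|x||y|} y·x` of homogeneous elements of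
parities `i`, `j`. -/
def sComm {K A : Type*} [Field K] [AddCommGroup A] [Module K A]
    (mul : A →ₗ[K] A →ₗ[K] A) (i j : ZMod 2) (x y : A) : A :=
  mul x y - sgn K i j • mul y x

/-- The product `x ∗ y = R(x)·y − (−1)^{|x||y|} y·R(x)` on homogeneous elements of
parities `i`, `j`. -/
def astOp {K A : Type*} [Field K] [AddCommGroup A] [Module K A]
    (mul : A →ₗ[K] A →ₗ[K] A) (R : A →ₗ[K] A) (i j : ZMod 2) (x y : A) : A :=
  mul (R x) y - sgn K i j • mul y (R x)

lemma sgn_comm (K : Type*) [Field K] (i j : ZMod 2) : sgn K i j = sgn K j i := by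
  unfold sgn; rw [Nat.mul_comm]

lemma sgn_sq (K : Type*) [Field K] (i j : ZMod 2) : sgn K i j * sgn K i j = 1 := by
  unfold sgn; rw [← mul_pow]; norm_num

lemma astOp_eq {K A : Type*} [Field K] [AddCommGroup A] [Module K A]
    (mul : A →ₗ[K] A →ₗ[K] A) (R : A →ₗ[K] A) (i j : ZMod 2) (x y : A) :
    astOp mul R i j x y = sComm mul i j (R x) y := rfl

lemma sComm_sub_smul {K A : Type*} [Field K] [AddCommGroup A] [Module K A]
    (mul : A →ₗ[K] A →ₗ[K] A) (i j : ZMod 2) (c : K) (a b z : A) :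
    sComm mul i j (a - c • b) z = sComm mul i j a z - c • sComm mul i j b z := by
  simp only [sComm, map_sub, map_smul, LinearMap.sub_apply, LinearMap.smul_apply]
  module

/-- if `R` is a Rota-Baxter operator of weight zero on a Lie-admissible
superalgebra `(A,·)`, then `x ∗ y := R(x)·y − (−1)^{|x||y|} y·R(x)` makes `(A,∗)` a
pre-Lie superalgebra. -/
theorem stmt9 {K A : Type*} [Field K] [CharZero K] [AddCommGroup A] [Module K A]
    (𝒜 : ZMod 2 → Submodule K A) (hgr : DirectSum.IsInternal 𝒜)
    (mul : A →ₗ[K] A →ₗ[K] A)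
    (hmul_even : ∀ (i j : ZMod 2), ∀ x ∈ 𝒜 i, ∀ y ∈ 𝒜 j, mul x y ∈ 𝒜 (i + j))
    -- Lie-admissibility: the supercommutator satisfies the super-Jacobi identity
    (hadm : ∀ (i j k : ZMod 2), ∀ x ∈ 𝒜 i, ∀ y ∈ 𝒜 j, ∀ z ∈ 𝒜 k,
      sComm mul i (j + k) x (sComm mul j k y z)
        = sComm mul (i + j) k (sComm mul i j x y) z
          + sgn K i j • sComm mul j (i + k) y (sComm mul i k x z))
    (R : A →ₗ[K] A) (hR : ∀ (i : ZMod 2), ∀ x ∈ 𝒜 i, R x ∈ 𝒜 i)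
    (hRB : ∀ (i j : ZMod 2), ∀ x ∈ 𝒜 i, ∀ y ∈ 𝒜 j,
      mul (R x) (R y) = R (mul (R x) y + mul x (R y))) :
    -- ∗ is even
    (∀ (i j : ZMod 2), ∀ x ∈ 𝒜 i, ∀ y ∈ 𝒜 j, astOp mul R i j x y ∈ 𝒜 (i + j)) ∧
    -- pre-Lie super-identity for ∗
    (∀ (i j k : ZMod 2), ∀ x ∈ 𝒜 i, ∀ y ∈ 𝒜 j, ∀ z ∈ 𝒜 k,
      astOp mul R (i + j) k (astOp mul R i j x y) z
          - astOp mul R i (j + k) x (astOp mul R j k y z)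
        = sgn K i j • (astOp mul R (i + j) k (astOp mul R j i y x) z
            - astOp mul R j (i + k) y (astOp mul R i k x z))) := by
  constructor
  · intro i j x hx y hy
    have h1 := hmul_even i j (R x) (hR i x hx) y hy
    have h2 := hmul_even j i y hy (R x) (hR i x hx)
    rw [add_comm j i] at h2
    exact Submodule.sub_mem _ h1 (Submodule.smul_mem _ _ h2)
  · intro i j k x hx y hy z hz
    have hRx := hR i x hx
    have hRy := hR j y hy
    have hsq := sgn_sq K i j
    -- key Rota-Baxter identity for the supercommutator
    have k1 : sComm mul i j (R x) (R y)
        = R (astOp mul R i j x y) - sgn K i j • R (astOp mul R j i y x) := by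
      unfold sComm astOp
      rw [hRB i j x hx y hy, hRB j i y hy x hx, ← sgn_comm K i j]
      simp only [map_add, map_sub, map_smul, smul_sub, smul_smul, hsq, one_smul]
      module
    have J := hadm i j k (R x) hRx (R y) hRy z hz
    rw [k1, sComm_sub_smul] at J
    simp only [astOp_eq] at J ⊢
    rw [J, smul_sub]
    abel
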